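/- Let β ∈ ℂ, C₀ > 0 and p ≥ 1/2 be real, and let (Z_j)_{j≥1} be complex-valued square-integrable random variables on a probability space satisfying E Z_j = β and E|Z_j − β|² ≤ C₀ for all j, and |E[(Z_j − β)·conj(Z_k − β)]| ≤ C₀·|j − k|^{−p} for all j ≠ k. Then the averages along cubes converge almost surely: lim_{N→∞} N^{−3}·Σ_{j=1}^{N³} Z_j = β almost surely. -/

import Mathlib

/-!
With `W j = Z j - β`, expanding `E|∑_{j ≤ n} W j|²` into covariances and summing
`|j - k|^(-1/2)` along a row (at most `4√n`) gives `E|n⁻¹ ∑_{j ≤ n} W j|² ≤ 5 C₀ / √n`.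
Along the cubes `n = N³` these bounds are `O(N^(-3/2))`, hence summable, so
`∑_N |N⁻³ ∑_{j ≤ N³} W j|²` has finite expectation; it is therefore finite almost surely and
its terms tend to zero.
-/

open MeasureTheory ProbabilityTheory Filter
open Finset Topology

lemma sum_comp_le_sum_of_injOn {ι κ M : Type*} [AddCommMonoid M] [PartialOrder M]
    [IsOrderedAddMonoid M] [DecidableEq κ] {s : Finset ι} {t : Finset κ} {f : κ → M} {e : ι → κ}
    (hf : ∀ y ∈ t, 0 ≤ f y) (he : Set.InjOn e s) (hst : Set.MapsTo e s t) :
    ∑ x ∈ s, f (e x) ≤ ∑ y ∈ t, f y := by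
  rw [← sum_image he]
  exact sum_le_sum_of_subset_of_nonneg (image_subset_iff.2 hst) fun y hy _ ↦ hf y hy

lemma sum_erase_Icc_natAbs_sub_le {g : ℕ → ℝ} (hg : ∀ d, 0 ≤ g d) {N j : ℕ} (hj : j ≤ N) :
    ∑ k ∈ (Icc 1 N).erase j, g ((j : ℤ) - k).natAbs ≤ 2 * ∑ d ∈ Icc 1 N, g d := by
  have hsplit : (Icc 1 N).erase j = Ico 1 j ∪ Ioc j N := by ext k; simp; omega
  have hdisj : Disjoint (Ico 1 j) (Ioc j N) := disjoint_left.2 fun k h₁ h₂ ↦ by simp at h₁ h₂; omega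
  rw [hsplit, sum_union hdisj, two_mul]
  gcongr
  · exact sum_comp_le_sum_of_injOn (fun d _ ↦ hg d) (fun a ha b hb h ↦ by simp at ha hb h; omega)
      fun k hk ↦ by simp at hk ⊢; omega
  · exact sum_comp_le_sum_of_injOn (fun d _ ↦ hg d) (fun a ha b hb h ↦ by simp at ha hb h; omega)
      fun k hk ↦ by simp at hk ⊢; omega

lemma sum_Icc_rpow_neg_half_le (N : ℕ) :
    ∑ d ∈ Icc 1 N, (d : ℝ) ^ (-(1 / 2) : ℝ) ≤ 2 * √N := by
  have step : ∀ i : ℕ, ((i + 1 : ℕ) : ℝ) ^ (-(1 / 2) : ℝ) ≤ 2 * √(i + 1 : ℕ) - 2 * √i := by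
    intro i
    have hi : √(i : ℝ) ≤ √((i + 1 : ℕ) : ℝ) := Real.sqrt_le_sqrt (by push_cast; linarith)
    have hpos : 0 < √((i + 1 : ℕ) : ℝ) := Real.sqrt_pos.2 (by positivity)
    have hsq : √((i + 1 : ℕ) : ℝ) ^ 2 = √(i : ℝ) ^ 2 + 1 := by
      rw [Real.sq_sqrt (by positivity), Real.sq_sqrt (by positivity)]; push_cast; ring
    rw [Real.rpow_neg (by positivity), ← Real.sqrt_eq_rpow, inv_le_iff_one_le_mul₀ hpos]
    nlinarith
  calc ∑ d ∈ Icc 1 N, (d : ℝ) ^ (-(1 / 2) : ℝ)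
      = ∑ i ∈ range N, ((i + 1 : ℕ) : ℝ) ^ (-(1 / 2) : ℝ) := by
        rw [← Ico_add_one_right_eq_Icc, sum_Ico_eq_sum_range]; simp [add_comm]
    _ ≤ ∑ i ∈ range N, (2 * √(i + 1 : ℕ) - 2 * √i) := sum_le_sum fun i _ ↦ step i
    _ = 2 * √N := by rw [sum_range_sub (fun n : ℕ ↦ 2 * √n)]; simp

lemma sum_erase_Icc_abs_sub_rpow_neg_le {p : ℝ} (hp : 1 / 2 ≤ p) {N j : ℕ} (hj : j ≤ N) :
    ∑ k ∈ (Icc 1 N).erase j, |(j : ℝ) - k| ^ (-p) ≤ 4 * √N := by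
  calc ∑ k ∈ (Icc 1 N).erase j, |(j : ℝ) - k| ^ (-p)
      ≤ ∑ k ∈ (Icc 1 N).erase j, (((j : ℤ) - k).natAbs : ℝ) ^ (-(1 / 2) : ℝ) := by
        refine sum_le_sum fun k hk ↦ ?_
        have hdist : |(j : ℝ) - k| = (((j : ℤ) - k).natAbs : ℝ) := by
          rw [Nat.cast_natAbs]; push_cast; rfl
        have hone : 1 ≤ |(j : ℝ) - k| := by
          rw [hdist, Nat.one_le_cast, Nat.one_le_iff_ne_zero, Int.natAbs_ne_zero, sub_ne_zero]
          exact_mod_cast (ne_of_mem_erase hk).symm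
        rw [← hdist]
        exact Real.rpow_le_rpow_of_exponent_le hone (by linarith)
    _ ≤ 2 * ∑ d ∈ Icc 1 N, (d : ℝ) ^ (-(1 / 2) : ℝ) :=
        sum_erase_Icc_natAbs_sub_le (fun d ↦ Real.rpow_nonneg d.cast_nonneg _) hj
    _ ≤ 4 * √N := by linarith [sum_Icc_rpow_neg_half_le N]

lemma summable_div_sqrt_cube (c : ℝ) : Summable fun N : ℕ ↦ c / √((N ^ 3 : ℕ) : ℝ) := by
  refine ((Real.summable_one_div_nat_rpow (p := 3 / 2)).2 (by norm_num)).mul_left c |>.congr ?_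
  intro N
  rw [Nat.cast_pow, Real.sqrt_eq_rpow, ← Real.rpow_natCast, ← Real.rpow_mul N.cast_nonneg,
    mul_one_div]
  norm_num

lemma inv_mul_sum_Icc_sub {K : Type*} [Field K] [CharZero K] (z : ℕ → K) (β : K) {n : ℕ}
    (hn : n ≠ 0) : (n : K)⁻¹ * ∑ j ∈ Icc 1 n, (z j - β) = (n : K)⁻¹ * ∑ j ∈ Icc 1 n, z j - β := by
  rw [sum_sub_distrib, sum_const, Nat.card_Icc, Nat.add_sub_cancel, nsmul_eq_mul, mul_sub,
    inv_mul_cancel_left₀ (Nat.cast_ne_zero.2 hn)]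

section

variable {Ω 𝕜 : Type*} [MeasurableSpace Ω] {μ : Measure Ω} [RCLike 𝕜]

lemma integral_mul_star_self (f : Ω → 𝕜) :
    ∫ ω, f ω * star (f ω) ∂μ = ((∫ ω, ‖f ω‖ ^ 2 ∂μ : ℝ) : 𝕜) := by
  simp_rw [RCLike.star_def, RCLike.mul_conj]
  norm_cast

lemma integral_norm_sum_sq_le {ι : Type*} (s : Finset ι) {W : ι → Ω → 𝕜}
    (hW : ∀ j ∈ s, MemLp (W j) 2 μ) :
    ∫ ω, ‖∑ j ∈ s, W j ω‖ ^ 2 ∂μ ≤ ∑ j ∈ s, ∑ k ∈ s, ‖∫ ω, W j ω * star (W k ω) ∂μ‖ := by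
  have hint : ∀ j ∈ s, ∀ k ∈ s, Integrable (fun ω ↦ W j ω * star (W k ω)) μ :=
    fun j hj k hk ↦ (hW j hj).integrable_mul (hW k hk).star
  have hexpand : ∫ ω, (∑ j ∈ s, W j ω) * star (∑ k ∈ s, W k ω) ∂μ
      = ∑ j ∈ s, ∑ k ∈ s, ∫ ω, W j ω * star (W k ω) ∂μ := by
    simp_rw [star_sum, sum_mul_sum]
    rw [integral_finsetSum s fun j hj ↦ integrable_finsetSum s (hint j hj)]
    exact sum_congr rfl fun j hj ↦ integral_finsetSum s (hint j hj)
  calc ∫ ω, ‖∑ j ∈ s, W j ω‖ ^ 2 ∂μ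
      = RCLike.re (∫ ω, (∑ j ∈ s, W j ω) * star (∑ k ∈ s, W k ω) ∂μ) := by
        rw [integral_mul_star_self (fun ω ↦ ∑ j ∈ s, W j ω), RCLike.ofReal_re]
    _ ≤ ‖∑ j ∈ s, ∑ k ∈ s, ∫ ω, W j ω * star (W k ω) ∂μ‖ := hexpand ▸ RCLike.re_le_norm _
    _ ≤ ∑ j ∈ s, ∑ k ∈ s, ‖∫ ω, W j ω * star (W k ω) ∂μ‖ :=
        (norm_sum_le _ _).trans (sum_le_sum fun j _ ↦ norm_sum_le _ _)

lemma integral_norm_sum_Icc_sq_le {W : ℕ → Ω → 𝕜} {C p : ℝ} (hC : 0 ≤ C) (hp : 1 / 2 ≤ p)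
    (hW : ∀ j, 1 ≤ j → MemLp (W j) 2 μ) (hvar : ∀ j, 1 ≤ j → ∫ ω, ‖W j ω‖ ^ 2 ∂μ ≤ C)
    (hcov : ∀ j k : ℕ, 1 ≤ j → 1 ≤ k → j ≠ k →
      ‖∫ ω, W j ω * star (W k ω) ∂μ‖ ≤ C * |(j : ℝ) - k| ^ (-p)) (n : ℕ) :
    ∫ ω, ‖∑ j ∈ Icc 1 n, W j ω‖ ^ 2 ∂μ ≤ 5 * C * n * √n := by
  have hrow : ∀ j ∈ Icc 1 n, ∑ k ∈ Icc 1 n, ‖∫ ω, W j ω * star (W k ω) ∂μ‖ ≤ C + 4 * C * √n := by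
    intro j hj
    obtain ⟨hj1, hjn⟩ := mem_Icc.1 hj
    rw [← add_sum_erase _ _ hj, integral_mul_star_self, RCLike.norm_ofReal,
      abs_of_nonneg (integral_nonneg fun _ ↦ by positivity)]
    gcongr
    · exact hvar j hj1
    · calc ∑ k ∈ (Icc 1 n).erase j, ‖∫ ω, W j ω * star (W k ω) ∂μ‖
          ≤ ∑ k ∈ (Icc 1 n).erase j, C * |(j : ℝ) - k| ^ (-p) := by
            refine sum_le_sum fun k hk ↦ hcov j k hj1 ?_ (ne_of_mem_erase hk).symm
            exact (mem_Icc.1 (mem_of_mem_erase hk)).1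
        _ ≤ 4 * C * √n := by
            rw [← mul_sum, mul_comm 4, mul_assoc]
            exact mul_le_mul_of_nonneg_left (sum_erase_Icc_abs_sub_rpow_neg_le hp hjn) hC
  have hn : (n : ℝ) ≤ n * √n := by
    rcases n.eq_zero_or_pos with rfl | hpos
    · simp
    · exact le_mul_of_one_le_right n.cast_nonneg (Real.one_le_sqrt.2 (by exact_mod_cast hpos))
  calc ∫ ω, ‖∑ j ∈ Icc 1 n, W j ω‖ ^ 2 ∂μ
      ≤ ∑ j ∈ Icc 1 n, ∑ k ∈ Icc 1 n, ‖∫ ω, W j ω * star (W k ω) ∂μ‖ :=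
        integral_norm_sum_sq_le _ fun j hj ↦ hW j (mem_Icc.1 hj).1
    _ ≤ n * (C + 4 * C * √n) := (sum_le_sum hrow).trans_eq (by simp [mul_add])
    _ ≤ 5 * C * n * √n := by nlinarith

lemma integral_norm_average_Icc_sq_le {W : ℕ → Ω → 𝕜} {C p : ℝ} (hC : 0 ≤ C) (hp : 1 / 2 ≤ p)
    (hW : ∀ j, 1 ≤ j → MemLp (W j) 2 μ) (hvar : ∀ j, 1 ≤ j → ∫ ω, ‖W j ω‖ ^ 2 ∂μ ≤ C)
    (hcov : ∀ j k : ℕ, 1 ≤ j → 1 ≤ k → j ≠ k →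
      ‖∫ ω, W j ω * star (W k ω) ∂μ‖ ≤ C * |(j : ℝ) - k| ^ (-p)) (n : ℕ) :
    ∫ ω, ‖(n : 𝕜)⁻¹ * ∑ j ∈ Icc 1 n, W j ω‖ ^ 2 ∂μ ≤ 5 * C / √n := by
  simp_rw [norm_mul, mul_pow, norm_inv, RCLike.norm_natCast]
  rw [integral_const_mul]
  rcases n.eq_zero_or_pos with rfl | hn
  · simp
  calc ((n : ℝ)⁻¹) ^ 2 * ∫ ω, ‖∑ j ∈ Icc 1 n, W j ω‖ ^ 2 ∂μ
      ≤ ((n : ℝ)⁻¹) ^ 2 * (5 * C * n * √n) := by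
        gcongr; exact integral_norm_sum_Icc_sq_le hC hp hW hvar hcov n
    _ = 5 * C / √n := by
        field_simp
        rw [Real.sq_sqrt n.cast_nonneg, mul_comm]

lemma ae_tendsto_zero_of_summable_integral_norm {E : Type*} [NormedAddCommGroup E]
    {F : ℕ → Ω → E} (hF_int : ∀ n, Integrable (F n) μ)
    (hF_sum : Summable fun n ↦ ∫ ω, ‖F n ω‖ ∂μ) :
    ∀ᵐ ω ∂μ, Tendsto (F · ω) atTop (𝓝 0) := by
  have hmeas : ∀ n, AEMeasurable (fun ω ↦ ‖F n ω‖ₑ) μ := fun n ↦ (hF_int n).1.enorm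
  have hfin : ∫⁻ ω, ∑' n, ‖F n ω‖ₑ ∂μ ≠ ⊤ := by
    rw [lintegral_tsum hmeas]
    simp_rw [← ofReal_integral_norm_eq_lintegral_enorm (hF_int _)]
    rw [← ENNReal.ofReal_tsum_of_nonneg (fun n ↦ integral_nonneg fun _ ↦ norm_nonneg _) hF_sum]
    exact ENNReal.ofReal_ne_top
  filter_upwards [ae_lt_top' (AEMeasurable.tsum hmeas) hfin] with ω hω
  exact tendsto_zero_iff_enorm_tendsto_zero.2 (ENNReal.tendsto_atTop_zero_of_tsum_ne_top hω.ne)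

lemma ae_tendsto_zero_of_summable_integral_norm_sq {X : ℕ → Ω → 𝕜} (hX : ∀ n, MemLp (X n) 2 μ)
    (hX_sum : Summable fun n ↦ ∫ ω, ‖X n ω‖ ^ 2 ∂μ) :
    ∀ᵐ ω ∂μ, Tendsto (X · ω) atTop (𝓝 0) := by
  have hsq := ae_tendsto_zero_of_summable_integral_norm (F := fun n ω ↦ ‖X n ω‖ ^ 2)
    (fun n ↦ (hX n).norm.integrable_sq) (by simpa using hX_sum)
  filter_upwards [hsq] with ω hω
  rw [tendsto_zero_iff_norm_tendsto_zero]
  simpa only [Real.sqrt_sq (norm_nonneg _), Real.sqrt_zero] using hω.sqrt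

end

theorem ae_tendsto_averages_along_cubes_general {Ω : Type*} [MeasureSpace Ω]
    [IsProbabilityMeasure (ℙ : Measure Ω)] (β : ℂ) (C₀ p : ℝ)
    (hC₀ : 0 < C₀) (hp : 1 / 2 ≤ p) (Z : ℕ → Ω → ℂ)
    (hmem : ∀ j : ℕ, 1 ≤ j → MemLp (Z j) 2 ℙ)
    (hvar : ∀ j : ℕ, 1 ≤ j → ∫ ω, ‖Z j ω - β‖ ^ 2 ∂ℙ ≤ C₀)
    (hcov : ∀ j k : ℕ, 1 ≤ j → 1 ≤ k → j ≠ k →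
      ‖∫ ω, (Z j ω - β) * star (Z k ω - β) ∂ℙ‖ ≤ C₀ * |(j : ℝ) - (k : ℝ)| ^ (-p)) :
    ∀ᵐ ω ∂ℙ, Tendsto
      (fun N : ℕ => ((N : ℂ) ^ 3)⁻¹ * ∑ j ∈ Finset.Icc 1 (N ^ 3), Z j ω)
      atTop (nhds β) := by
  set X : ℕ → Ω → ℂ := fun N ω ↦ ((N ^ 3 : ℕ) : ℂ)⁻¹ * ∑ j ∈ Icc 1 (N ^ 3), (Z j ω - β)
  have hW : ∀ j, 1 ≤ j → MemLp (fun ω ↦ Z j ω - β) 2 ℙ :=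
    fun j hj ↦ (hmem j hj).sub (memLp_const β)
  have hX : ∀ N, MemLp (X N) 2 ℙ := fun N ↦
    (memLp_finsetSum _ fun j hj ↦ hW j (mem_Icc.1 hj).1).const_mul _
  have hX_sum : Summable fun N ↦ ∫ ω, ‖X N ω‖ ^ 2 ∂ℙ :=
    (summable_div_sqrt_cube (5 * C₀)).of_nonneg_of_le
      (fun _ ↦ integral_nonneg fun _ ↦ by positivity)
      fun N ↦ integral_norm_average_Icc_sq_le hC₀.le hp hW hvar hcov (N ^ 3)
  filter_upwards [ae_tendsto_zero_of_summable_integral_norm_sq hX hX_sum] with ω hω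
  rw [← tendsto_sub_nhds_zero_iff]
  refine hω.congr' ?_
  filter_upwards [eventually_ne_atTop 0] with N hN
  dsimp only [X]
  rw [inv_mul_sum_Icc_sub _ _ (pow_ne_zero 3 hN), Nat.cast_pow]

theorem ae_tendsto_averages_along_cubes {Ω : Type*} [MeasureSpace Ω]
    [IsProbabilityMeasure (ℙ : Measure Ω)] (β : ℂ) (C₀ p : ℝ)
    (hC₀ : 0 < C₀) (hp : 1 / 2 ≤ p) (Z : ℕ → Ω → ℂ)
    (hmem : ∀ j : ℕ, 1 ≤ j → MemLp (Z j) 2 ℙ)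
    (hmean : ∀ j : ℕ, 1 ≤ j → ∫ ω, Z j ω ∂ℙ = β)
    (hvar : ∀ j : ℕ, 1 ≤ j → ∫ ω, ‖Z j ω - β‖ ^ 2 ∂ℙ ≤ C₀)
    (hcov : ∀ j k : ℕ, 1 ≤ j → 1 ≤ k → j ≠ k →
      ‖∫ ω, (Z j ω - β) * star (Z k ω - β) ∂ℙ‖ ≤ C₀ * |(j : ℝ) - (k : ℝ)| ^ (-p)) :
    ∀ᵐ ω ∂ℙ, Tendsto
      (fun N : ℕ => ((N : ℂ) ^ 3)⁻¹ * ∑ j ∈ Finset.Icc 1 (N ^ 3), Z j ω)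
      atTop (nhds β) :=
  ae_tendsto_averages_along_cubes_general β C₀ p hC₀ hp Z hmem hvar hcov
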